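/- Let A = {a,b,c}, m ≥ 4, and let y ≥ 1, x₁ ≥ 1, and consider the set Y = {a⋄^{x₁}a, b⋄^y b, b⋄^y c, c⋄^y b, c⋄^y c, a⋄^y a⋄^y b, a⋄^y a⋄^y c, b⋄^y a⋄^y b, c⋄^y a⋄^y c}. If the exact power of 2 dividing x₁ + 1 differs from the exact power of 2 dividing y + 1, then Y is unavoidable over A, i.e., every two-sided infinite word over A meets some element of Y. -/

import Mathlib

/-- The three-letter alphabet. -/
inductive ABC | a | b | c
deriving DecidableEq
open ABC

/-- A partial word of length `m` over alphabet `A`. -/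
abbrev PW (m : ℕ) (A : Type) := Fin m → Option A

/-- A two-sided infinite word `w` meets a partial word `u`. -/
def Meets {m : ℕ} {A : Type} (w : ℤ → A) (u : PW m A) : Prop :=
  ∃ i : ℤ, ∀ j : Fin m, ∀ x : A, u j = some x → w (i + (j : ℕ)) = x

/-- A set of partial words is unavoidable over `A`. -/
def Unavoidable {m : ℕ} {A : Type} (X : Set (PW m A)) : Prop :=
  ∀ w : ℤ → A, ∃ u ∈ X, Meets w u

/-- A set of partial words is avoidable over `A`. -/
def Avoidable {m : ℕ} {A : Type} (X : Set (PW m A)) : Prop :=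
  ∃ w : ℤ → A, ∀ u ∈ X, ¬ Meets w u

/-- The partial word `x ⋄^(m-2) y` of length `m`: first letter `x`, last letter `y`,
holes in between. -/
def oneHole {A : Type} (m : ℕ) (x y : A) : PW m A :=
  fun j => if (j : ℕ) = 0 then some x else if (j : ℕ) = m - 1 then some y else none

/-- The partial word `x ⋄^(p-1) d ⋄^(m-p-2) y` of length `m`: first letter `x`,
letter `d` at position `p`, last letter `y`, holes elsewhere. -/
def twoDef {A : Type} (m : ℕ) (x d y : A) (p : ℕ) : PW m A :=
  fun j => if (j : ℕ) = 0 then some x else if (j : ℕ) = p then some d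
    else if (j : ℕ) = m - 1 then some y else none

/-- The two-sided infinite word of period `P` repeating the block `f` (given on `[0, P)`). -/
def periodic {A : Type} (P : ℕ) (f : ℕ → A) : ℤ → A :=
  fun i => f ((i % (P : ℤ)).toNat)

/-- Intro rule for meeting a `oneHole` pattern. -/
lemma meets_oneHole_of {A : Type} {w : ℤ → A} {k : ℕ} {x y : A} {i : ℤ}
    (h0 : w i = x) (h1 : w (i + ((k + 1 : ℕ) : ℤ)) = y) :
    Meets w (oneHole (k + 2) x y) := by
  refine ⟨i, fun j z hj => ?_⟩
  unfold oneHole at hj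
  rcases eq_or_ne (j : ℕ) 0 with h | h
  · simp only [h, if_true] at hj
    rw [h]
    simp only [Nat.cast_zero, add_zero]
    rw [h0, Option.some_inj.mp hj]
  · rcases eq_or_ne (j : ℕ) (k + 1) with h' | h'
    · have : k + 2 - 1 = k + 1 := rfl
      simp only [h, if_false, h', this, if_true] at hj
      rw [h']
      rw [h1, Option.some_inj.mp hj]
    · have hne : (j : ℕ) ≠ k + 2 - 1 := by omega
      simp [h, hne] at hj
      exact absurd hj.1 h'

/-- Number theory: `d = gcd(|P-q|, 2q)` not dividing `q` forces equal 2-adic valuations. -/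
lemma nt_aux (Pn qn : ℕ) (hP : 1 ≤ Pn) (hq : 1 ≤ qn)
    (h : ¬ (Nat.gcd ((Pn : ℤ) - (qn : ℤ)).natAbs (2 * qn) ∣ qn)) :
    padicValNat 2 Pn = padicValNat 2 qn := by
  set Dn : ℕ := ((Pn : ℤ) - (qn : ℤ)).natAbs with hDn
  set dn : ℕ := Nat.gcd Dn (2 * qn) with hdn
  have hcase : Pn = qn + Dn ∨ qn = Pn + Dn := by omega
  set e := padicValNat 2 qn with he
  have hq0 : qn ≠ 0 := by omega
  have hP0 : Pn ≠ 0 := by omega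
  haveI : Fact (Nat.Prime 2) := ⟨Nat.prime_two⟩
  have h2e : 2 ^ e ∣ qn := pow_padicValNat_dvd
  have h2e1 : ¬ 2 ^ (e + 1) ∣ qn := pow_succ_padicValNat_not_dvd hq0
  have hdn0 : dn ≠ 0 := by
    have : 0 < Nat.gcd Dn (2 * qn) := Nat.gcd_pos_of_pos_right _ (by omega)
    omega
  have h21 : 2 ^ (e + 1) ∣ dn := by
    by_contra hcon
    apply h
    set α := dn.factorization 2 with hα
    set u := ordCompl[2] dn with hu
    have hdu : 2 ^ α * u = dn := Nat.ordProj_mul_ordCompl_eq_self dn 2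
    have hunotdvd : ¬ (2 ∣ u) := Nat.not_dvd_ordCompl Nat.prime_two hdn0
    have hucop : Nat.Coprime 2 u := (Nat.Prime.coprime_iff_not_dvd Nat.prime_two).mpr hunotdvd
    have hαe : α ≤ e := by
      by_contra hαe
      exact hcon ((pow_dvd_pow 2 (by omega)).trans (Nat.ordProj_dvd dn 2))
    have h2αq : 2 ^ α ∣ qn := (pow_dvd_pow 2 hαe).trans h2e
    have huq : u ∣ qn := by
      have h1 : u ∣ 2 * qn := (Nat.ordCompl_dvd dn 2).trans (Nat.gcd_dvd_right _ _)
      exact (Nat.Coprime.dvd_of_dvd_mul_left (hucop.symm) h1)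
    have : dn ∣ qn := by
      rw [← hdu]
      exact Nat.Coprime.mul_dvd_of_dvd_of_dvd (Nat.Coprime.pow_left α hucop) h2αq huq
    exact this
  have h2D : 2 ^ (e + 1) ∣ Dn := h21.trans (Nat.gcd_dvd_left _ _)
  have h2eD : 2 ^ e ∣ Dn := (pow_dvd_pow 2 (by omega)).trans h2D
  have key : 2 ^ e ∣ Pn ∧ ¬ 2 ^ (e + 1) ∣ Pn := by
    rcases hcase with hc | hc
    · constructor
      · rw [hc]; exact dvd_add h2e h2eD
      · intro hh
        apply h2e1
        have := Nat.dvd_sub hh h2D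
        rwa [show Pn - Dn = qn by omega] at this
    · constructor
      · have := Nat.dvd_sub h2e h2eD
        rwa [show qn - Dn = Pn by omega] at this
      · intro hh
        apply h2e1
        rw [hc]
        exact dvd_add hh h2D
  have hle : e ≤ Pn.factorization 2 :=
    (Nat.Prime.pow_dvd_iff_le_factorization Nat.prime_two hP0).mp key.1
  have hlt : ¬ (e + 1 ≤ Pn.factorization 2) := fun hh =>
    key.2 ((Nat.Prime.pow_dvd_iff_le_factorization Nat.prime_two hP0).mpr hh)
  rw [← Nat.factorization_def Pn Nat.prime_two]
  omega

/-- If the exact power of 2 dividing x₁+1 differs from that dividing y+1, the set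
Y = {a⋄^(x₁)a, b⋄^(y)b, b⋄^(y)c, c⋄^(y)b, c⋄^(y)c, a⋄^(y)a⋄^(y)b, a⋄^(y)a⋄^(y)c,
b⋄^(y)a⋄^(y)b, c⋄^(y)a⋄^(y)c} is unavoidable: every two-sided infinite word
meets some element of Y. -/
theorem stmt_13 (x₁ y : ℕ) (hx₁ : 1 ≤ x₁) (hy : 1 ≤ y)
    (hpow : padicValNat 2 (x₁ + 1) ≠ padicValNat 2 (y + 1)) :
    ∀ w : ℤ → ABC,
      Meets w (oneHole (x₁ + 2) a a) ∨
      Meets w (oneHole (y + 2) b b) ∨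
      Meets w (oneHole (y + 2) b c) ∨
      Meets w (oneHole (y + 2) c b) ∨
      Meets w (oneHole (y + 2) c c) ∨
      Meets w (twoDef (2 * y + 3) a a b (y + 1)) ∨
      Meets w (twoDef (2 * y + 3) a a c (y + 1)) ∨
      Meets w (twoDef (2 * y + 3) b a b (y + 1)) ∨
      Meets w (twoDef (2 * y + 3) c a c (y + 1)) := by
  intro w
  by_contra hcon
  push_neg at hcon
  obtain ⟨hA, hBB, hBC, hCB, hCC, -, -, -, -⟩ := hcon
  set P : ℤ := ((x₁ + 1 : ℕ) : ℤ) with hPdef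
  set Q : ℤ := ((y + 1 : ℕ) : ℤ) with hQdef
  have hQpos : 0 < Q := by rw [hQdef]; positivity
  -- pointwise consequences of avoiding the oneHole patterns
  have A1 : ∀ i : ℤ, w i = a → w (i + P) = a → False := fun i p1 p2 =>
    hA (meets_oneHole_of p1 p2)
  have Abb : ∀ i : ℤ, w i = b → w (i + Q) = b → False := fun i p1 p2 =>
    hBB (meets_oneHole_of p1 p2)
  have Abc : ∀ i : ℤ, w i = b → w (i + Q) = c → False := fun i p1 p2 =>
    hBC (meets_oneHole_of p1 p2)
  have Acb : ∀ i : ℤ, w i = c → w (i + Q) = b → False := fun i p1 p2 =>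
    hCB (meets_oneHole_of p1 p2)
  have Acc : ∀ i : ℤ, w i = c → w (i + Q) = c → False := fun i p1 p2 =>
    hCC (meets_oneHole_of p1 p2)
  -- at least one `a` in each pair at distance Q
  have D2 : ∀ i : ℤ, w i = a ∨ w (i + Q) = a := by
    intro i
    rcases hwi : w i with _ | _ | _ <;> rcases hwq : w (i + Q) with _ | _ | _
    · exact Or.inl rfl
    · exact Or.inl rfl
    · exact Or.inl rfl
    · exact Or.inr rfl
    · exact absurd (Abb i hwi hwq) id
    · exact absurd (Abc i hwi hwq) id
    · exact Or.inr rfl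
    · exact absurd (Acb i hwi hwq) id
    · exact absurd (Acc i hwi hwq) id
  -- never two `a`'s at distance Q
  have E1 : ∀ i : ℤ, w i = a → w (i + Q) = a → False := by
    intro i p1 p2
    rcases D2 (i + P) with h | h
    · exact A1 i p1 h
    · apply A1 (i + Q) p2
      rw [show i + Q + P = i + P + Q by ring]
      exact h
  have E : ∀ i : ℤ, w (i + Q) = a ↔ ¬ w i = a := by
    intro i
    constructor
    · exact fun h2 h1 => E1 i h1 h2
    · exact fun h => (D2 i).resolve_left h
  have Per : ∀ i : ℤ, (w (i + 2 * Q) = a ↔ w i = a) := by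
    intro i
    rw [show i + 2 * Q = i + Q + Q by ring, E (i + Q), E i, not_not]
  have PerK : ∀ k : ℤ, ∀ i : ℤ, (w (i + 2 * Q * k) = a ↔ w i = a) := by
    intro k
    induction k using Int.induction_on with
    | zero => simp
    | succ n ih =>
      intro i
      rw [show i + 2 * Q * ((n : ℤ) + 1) = i + 2 * Q * (n : ℤ) + 2 * Q by ring,
        Per, ih]
    | pred n ih =>
      intro i
      rw [← ih i, ← Per (i + 2 * Q * (-(n : ℤ) - 1)),
        show i + 2 * Q * (-(n : ℤ) - 1) + 2 * Q = i + 2 * Q * (-(n : ℤ)) by ring]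
  -- step by P - Q preserves `a`
  have S0 : ∀ i : ℤ, w i = a → w (i + (P - Q)) = a := by
    intro i h
    have n1 : ¬ w (i + P) = a := fun hh => A1 i h hh
    have hE := E (i + (P - Q))
    rw [show i + (P - Q) + Q = i + P by ring] at hE
    by_contra hc
    exact n1 (hE.mpr hc)
  have SN : ∀ n : ℕ, ∀ i : ℤ, w i = a → w (i + (n : ℤ) * (P - Q)) = a := by
    intro n
    induction n with
    | zero => intro i h; simpa using h
    | succ n ih =>
      intro i h
      have h2 := S0 _ (ih i h)
      rw [show i + (n : ℤ) * (P - Q) + (P - Q) = i + ((n : ℕ) + 1 : ℤ) * (P - Q) by ring] at h2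
      rw [show (((n : ℕ) + 1 : ℕ) : ℤ) = ((n : ℕ) : ℤ) + 1 by push_cast; ring]
      exact h2
  -- Bezout: shift by gcd preserves `a`
  set D : ℤ := P - Q with hDdef
  set M : ℤ := 2 * Q with hMdef
  have hMpos : 0 < M := by positivity
  set d : ℕ := Int.gcd D M with hddef
  have hdpos : 0 < d := Int.gcd_pos_of_ne_zero_right D (ne_of_gt hMpos)
  have hdD : (d : ℤ) ∣ D := Int.gcd_dvd_left D M
  have hdM : (d : ℤ) ∣ M := Int.gcd_dvd_right D M
  have hbez : (d : ℤ) = D * Int.gcdA D M + M * Int.gcdB D M := Int.gcd_eq_gcd_ab D M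
  set u : ℤ := Int.gcdA D M with hudef
  set v : ℤ := Int.gcdB D M with hvdef
  set m : ℤ := M / d with hmdef
  have hmd : m * d = M := Int.ediv_mul_cancel hdM
  have hmpos : 0 < m := by
    rcases lt_trichotomy m 0 with h | h | h
    · nlinarith [hmd]
    · rw [h] at hmd; simp at hmd; omega
    · exact h
  set n' : ℤ := u % m with hn'def
  have hn'nonneg : 0 ≤ n' := Int.emod_nonneg u (ne_of_gt hmpos)
  have hdvd : M ∣ (n' * D - (d : ℤ)) := by
    have h1 : n' - u = -(m * (u / m)) := by
      rw [hn'def, Int.emod_def]; ring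
    obtain ⟨D', hD'⟩ := hdD
    have hMmD : M ∣ m * D := ⟨D', by rw [hD', ← hmd]; ring⟩
    have h2 : M ∣ (n' - u) * D := by
      rw [h1]
      have : -(m * (u / m)) * D = (-(u / m)) * (m * D) := by ring
      rw [this]
      exact Dvd.dvd.mul_left hMmD _
    have h3 : n' * D - (d : ℤ) = (n' - u) * D + (-(M * v)) := by
      rw [hbez]; ring
    rw [h3]
    exact dvd_add h2 (dvd_neg.mpr (dvd_mul_right M v))
  have S2 : ∀ i : ℤ, w i = a → w (i + (d : ℤ)) = a := by
    intro i h
    have h1 := SN n'.toNat i h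
    rw [Int.toNat_of_nonneg hn'nonneg] at h1
    obtain ⟨k, hk⟩ := hdvd
    have : i + n' * D = i + (d : ℤ) + 2 * Q * k := by
      rw [hMdef] at hk; linarith [hk]
    rw [this] at h1
    exact (PerK k (i + (d : ℤ))).mp h1
  -- d does not divide Q
  have hnd : ¬ ((d : ℤ) ∣ Q) := by
    intro hdq
    obtain ⟨t, ht⟩ := hdq
    have htpos : 0 < t := by
      rcases lt_trichotomy t 0 with h | h | h
      · nlinarith
      · rw [h] at ht; simp at ht; omega
      · exact h
    have Sd : ∀ s : ℕ, ∀ i : ℤ, w i = a → w (i + (s : ℤ) * (d : ℤ)) = a := by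
      intro s
      induction s with
      | zero => intro i h; simpa using h
      | succ s ih =>
        intro i h
        have h2 := S2 _ (ih i h)
        rw [show i + (s : ℤ) * (d : ℤ) + (d : ℤ) = i + (((s : ℕ) : ℤ) + 1) * (d : ℤ) by ring] at h2
        rw [show (((s : ℕ) + 1 : ℕ) : ℤ) = ((s : ℕ) : ℤ) + 1 by push_cast; ring]
        exact h2
    have hex : ∃ i : ℤ, w i = a := by
      rcases D2 0 with h | h
      · exact ⟨0, h⟩
      · exact ⟨0 + Q, h⟩
    obtain ⟨i₀, hi₀⟩ := hex
    have h1 := Sd t.toNat i₀ hi₀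
    rw [Int.toNat_of_nonneg (le_of_lt htpos)] at h1
    rw [show i₀ + t * (d : ℤ) = i₀ + Q by rw [ht]; ring] at h1
    exact (E i₀).mp h1 hi₀
  -- transfer to naturals and conclude
  have hdn : d = Nat.gcd (((x₁ + 1 : ℕ) : ℤ) - ((y + 1 : ℕ) : ℤ)).natAbs (2 * (y + 1)) := by
    have h0 : d = Nat.gcd D.natAbs M.natAbs := rfl
    have hMabs : M.natAbs = 2 * (y + 1) := by
      rw [hMdef, hQdef, show (2 : ℤ) * ((y + 1 : ℕ) : ℤ) = ((2 * (y + 1) : ℕ) : ℤ) by push_cast; ring,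
        Int.natAbs_natCast]
    rw [h0, hMabs, hDdef, hPdef, hQdef]
  have hndn : ¬ (Nat.gcd (((x₁ + 1 : ℕ) : ℤ) - ((y + 1 : ℕ) : ℤ)).natAbs (2 * (y + 1)) ∣ (y + 1)) := by
    rw [← hdn]
    intro hh
    apply hnd
    rw [hQdef]
    exact_mod_cast Int.natCast_dvd_natCast.mpr hh
  exact hpow (nt_aux (x₁ + 1) (y + 1) (by omega) (by omega) hndn)
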